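/- Let p and q be anisotropic quasilinear quadratic forms of dimension ≥ 2 over a field F of characteristic 2. If q_{F(p)} is isotropic, then p₁ is similar to a subform of (q_{F(p)})_an. -/

import Mathlib

open scoped BigOperators

namespace QLin

variable (K : Type) [Field K]

/-- Value of the diagonal (quasilinear) quadratic form with coefficients `d` at the vector `v`. -/
def qf {n : ℕ} (d : Fin n → K) (v : Fin n → K) : K := ∑ i, d i * v i ^ 2

/-- The set `D(q)` of values represented by the diagonal form `d`. -/
def Dset {n : ℕ} (d : Fin n → K) : Set K := Set.range (qf K d)

/-- A diagonal quadratic form is anisotropic if it has no nontrivial zero. -/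
def Anis {n : ℕ} (d : Fin n → K) : Prop := ∀ v : Fin n → K, qf K d v = 0 → v = 0

/-- The isotropy index `i₀`: the maximal dimension of a totally isotropic subspace. -/
noncomputable def i0 {n : ℕ} (d : Fin n → K) : ℕ :=
  sSup {m | ∃ W : Submodule K (Fin n → K), (∀ v ∈ W, qf K d v = 0) ∧ Module.finrank K W = m}

/-- Isometry of two diagonal quadratic forms (possibly of different ambient dimensions;
an isometry forces the dimensions to agree). -/
def Isom {n m : ℕ} (d : Fin n → K) (e : Fin m → K) : Prop :=
  ∃ φ : (Fin n → K) ≃ₗ[K] (Fin m → K), ∀ v, qf K e (φ v) = qf K d v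

/-- `r` is a subform of `q` : `q ≅ r ⊥ s` for some form `s`. -/
def Subform {n m : ℕ} (r : Fin n → K) (q : Fin m → K) : Prop :=
  ∃ (k : ℕ) (s : Fin k → K), Isom K q (Fin.append r s)

/-- `d` is similar to `e` : `e ≅ a • d` for some `a ≠ 0`. -/
def Similar {n m : ℕ} (d : Fin n → K) (e : Fin m → K) : Prop :=
  ∃ a : K, a ≠ 0 ∧ Isom K (fun i => a * d i) e

/-- `d` is similar to a subform of `q`. -/
def SimSubform {n m : ℕ} (d : Fin n → K) (q : Fin m → K) : Prop :=
  ∃ a : K, a ≠ 0 ∧ Subform K (fun i => a * d i) q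

/-- Tensor product of diagonal quadratic forms. -/
def tens {n m : ℕ} (d : Fin n → K) (e : Fin m → K) : Fin (n * m) → K :=
  fun k => d (finProdFinEquiv.symm k).1 * e (finProdFinEquiv.symm k).2

/-- `q` is divisible by `π` : `q ≅ π ⊗ r` for some form `r`. -/
def Divisible {n m : ℕ} (π : Fin n → K) (q : Fin m → K) : Prop :=
  ∃ (k : ℕ) (r : Fin k → K), Isom K q (tens K π r)

/-- The diagonal coefficients of the `s`-fold quasi-Pfister form `⟨⟨a₁,…,a_s⟩⟩ =
`⟨1,a₁⟩ ⊗ ⋯ ⊗ ⟨1,a_s⟩`: the products of the `a i` over all subsets of the index set. -/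
def qPfister {s : ℕ} (a : Fin s → K) : Fin (2 ^ s) → K :=
  fun j => ∏ i : Fin s, if Nat.testBit (j : ℕ) (i : ℕ) then a i else 1

/-- `r` is (a representative of) the anisotropic part of `q`:
`r` is anisotropic and `q ≅ i₀(q)·⟨0⟩ ⊥ r`. -/
def IsAnisPart {n m : ℕ} (r : Fin n → K) (q : Fin m → K) : Prop :=
  Anis K r ∧ ∃ k : ℕ, Isom K q (Fin.append (fun _ : Fin k => (0 : K)) r)

/-- The divisibility index `𝔡₀(q)`: the largest `s` such that the anisotropic part of `q`
is divisible by an `s`-fold quasi-Pfister form. -/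
noncomputable def d0 {n : ℕ} (q : Fin n → K) : ℕ :=
  sSup {s | ∃ a : Fin s → K, (∀ i, a i ≠ 0) ∧
    ∃ (k : ℕ) (r : Fin k → K), IsAnisPart K r q ∧ Divisible K (qPfister K a) r}

/-- The norm field `N(q)`: the smallest subfield of `K` containing all squares and all
ratios of nonzero represented values of `q`. -/
def normField {n : ℕ} (d : Fin n → K) : Subfield K :=
  Subfield.closure ((Set.range fun x : K => x ^ 2) ∪
    {z | ∃ a ∈ Dset K d, ∃ b ∈ Dset K d, b ≠ 0 ∧ z = a / b})

/-- `lndeg(q)`: the base-2 logarithm of the dimension of the norm form of `q`, i.e. the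
(unique, when `q` is nonzero) `s` such that some anisotropic `s`-fold quasi-Pfister form
represents exactly the elements of the norm field of `q`. -/
noncomputable def lndeg {n : ℕ} (d : Fin n → K) : ℕ :=
  sInf {s | ∃ a : Fin s → K, (∀ i, a i ≠ 0) ∧ Anis K (qPfister K a) ∧
    Dset K (qPfister K a) = (normField K d : Set K)}

/-- Base change of a diagonal quadratic form along a field extension `F → K`. -/
def bc (F : Type) [Field F] (K : Type) [Field K] [Algebra F K] {n : ℕ} (d : Fin n → F) :
    Fin n → K := fun i => algebraMap F K (d i)

/-- The defining polynomial of the standard affine chart of the projective quadric `{p = 0}`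
attached to a diagonal form `p` of dimension `n + 2` (dehomogenized at the last variable). -/
noncomputable def chartD (F : Type) [Field F] {n : ℕ} (d : Fin (n + 2) → F) :
    MvPolynomial (Fin (n + 1)) F :=
  (∑ i : Fin (n + 1), MvPolynomial.C (d i.castSucc) * MvPolynomial.X i ^ 2) +
    MvPolynomial.C (d (Fin.last (n + 1)))

/-- `K` is (realizes) the function field `F(p)` of the projective quadric `{p = 0}`:
`K` is generated over `F` by a point `x` of the affine chart of the quadric whose
ideal of relations is exactly the one generated by the defining equation. -/
def IsFunFld (F : Type) [Field F] {n : ℕ} (p : Fin (n + 2) → F) (K : Type) [Field K]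
    [Algebra F K] : Prop :=
  ∃ x : Fin (n + 1) → K,
    RingHom.ker (MvPolynomial.aeval x : MvPolynomial (Fin (n + 1)) F →ₐ[F] K) =
      Ideal.span {chartD F p} ∧
    ∀ z : K, ∃ a b : MvPolynomial (Fin (n + 1)) F,
      MvPolynomial.aeval x b ≠ 0 ∧ z * MvPolynomial.aeval x b = MvPolynomial.aeval x a

/-- The full diagonal polynomial of a diagonal form (the equation of the affine cone). -/
noncomputable def diagPoly (F : Type) [Field F] {n : ℕ} (d : Fin n → F) :
    MvPolynomial (Fin n) F :=
  ∑ i : Fin n, MvPolynomial.C (d i) * MvPolynomial.X i ^ 2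

/-- `M` is (realizes) the affine cone function field `F[p]`, i.e. the fraction field of
`F[T₁,…,Tₙ]/(p(T))`. -/
def IsAffFunFld (F : Type) [Field F] {n : ℕ} (p : Fin n → F) (M : Type) [Field M]
    [Algebra F M] : Prop :=
  ∃ x : Fin n → M,
    RingHom.ker (MvPolynomial.aeval x : MvPolynomial (Fin n) F →ₐ[F] M) =
      Ideal.span {diagPoly F p} ∧
    ∀ z : M, ∃ a b : MvPolynomial (Fin n) F,
      MvPolynomial.aeval x b ≠ 0 ∧ z * MvPolynomial.aeval x b = MvPolynomial.aeval x a

/-- `L` is a purely transcendental field extension of `F`. -/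
def IsPurelyTransc (F L : Type) [Field F] [Field L] [Algebra F L] : Prop :=
  ∃ s : Set L, AlgebraicIndependent F (Subtype.val : s → L) ∧
    IntermediateField.adjoin F s = ⊤

end QLin

/-!
Let `x = (x₀, …, xₙ)` be the generic point of the affine quadric `p = 0`, so that `K = F(x)`,
`x₁, …, xₙ` are algebraically independent and `x₀² ∈ F[x₁, …, xₙ]`. Clearing denominators in an
isotropic vector of `q_K` and reducing modulo the quadric yields polynomials
`A_j = R_j(X₁, …, Xₙ) + S_j(X₁, …, Xₙ) X₀`, not all vanishing at `x`, with
`∑ q_j A_j² = G · p(X)` for some polynomial `G`. Restricting this identity to the line `x + t eᵢ`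
and comparing the coefficients of `t²` (in characteristic 2 the coefficient of `t²` in `f(t)²` is
the square of the coefficient of `t` in `f`) gives `pᵢ G(x) ∈ D(q_K)` for every variable `i`, and
then also for the constant coefficient, which equals `∑ pᵢ xᵢ²`. For `i = 0` the value is `q(S(x))`, which is
nonzero: otherwise, as `q` stays anisotropic over the purely transcendental extension
`F(x₁, …, xₙ)`, all `S_j` and then all `R_j` would vanish. Hence `a = G(x)` satisfies
`a · D(p_K) ⊆ D(q_K)`.

Since `D(p₁) = D(p_K)` and `D((q_K)_an) = D(q_K)`, it remains to see that an anisotropic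
quasilinear form `σ` with `D(σ) ⊆ D(τ)` is a subform of `τ`: vectors representing the
coefficients of `σ` are linearly independent, and since `τ` is additive, `τ` is the diagonal
form of its values on any basis extending them.
-/

theorem MvPolynomial.coeff_pow_expChar_smul {R σ : Type*} [CommSemiring R] (p : ℕ) [ExpChar R p]
    (f : MvPolynomial σ R) (m : σ →₀ ℕ) : (f ^ p).coeff (p • m) = f.coeff m ^ p := by
  rw [← map_frobenius_expand, coeff_map, coeff_expand_smul _ (expChar_ne_zero R p), frobenius_def]

theorem Polynomial.coeff_pow_expChar_mul {R : Type*} [CommSemiring R] (p : ℕ) [ExpChar R p]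
    (f : Polynomial R) (n : ℕ) : (f ^ p).coeff (n * p) = f.coeff n ^ p := by
  rw [← map_frobenius_expand, coeff_map, coeff_expand_mul (expChar_pos R p), frobenius_def]

theorem exists_common_denominator {R K ι Φ : Type*} [CommRing R] [Field K] [Fintype ι]
    [FunLike Φ R K] [RingHomClass Φ R K] (φ : Φ) (h : ∀ z : K, ∃ a b, φ b ≠ 0 ∧ z * φ b = φ a)
    (v : ι → K) :
    ∃ (B : R) (A : ι → R), φ B ≠ 0 ∧ ∀ j, v j * φ B = φ (A j) := by
  classical
  choose a b hb hab using fun j => h (v j)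
  refine ⟨∏ j, b j, fun j => a j * ∏ k ∈ Finset.univ.erase j, b k,
    by simpa [map_prod, Finset.prod_ne_zero_iff] using fun j => hb j, fun j => ?_⟩
  rw [← Finset.mul_prod_erase _ b (Finset.mem_univ j), map_mul, map_mul, ← hab]
  ring

namespace QLin

section QuasilinearForms

variable {K : Type} [Field K]

theorem qf_smul {n : ℕ} (d : Fin n → K) (c : K) (v : Fin n → K) :
    qf K d (c • v) = c ^ 2 * qf K d v := by
  simp only [qf, Finset.mul_sum, Pi.smul_apply, smul_eq_mul]
  exact Finset.sum_congr rfl fun i _ => by ring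

theorem qf_eq_sum_sq_mul {n : ℕ} (d v : Fin n → K) : qf K d v = ∑ i, v i ^ 2 * d i := by
  simp only [qf, mul_comm]

theorem qf_single {n : ℕ} (d : Fin n → K) (i : Fin n) : qf K d (Pi.single i 1) = d i := by
  simp [qf, Pi.single_apply]

theorem mem_Dset {n : ℕ} (d : Fin n → K) (i : Fin n) : d i ∈ Dset K d :=
  ⟨_, qf_single d i⟩

theorem Anis.coeff_ne_zero {n : ℕ} {d : Fin n → K} (hd : Anis K d) (i : Fin n) : d i ≠ 0 :=
  fun h0 => by simpa using congrFun (hd _ ((qf_single d i).trans h0)) i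

theorem qf_mul_left {n : ℕ} (a : K) (d v : Fin n → K) :
    qf K (fun i => a * d i) v = a * qf K d v := by
  simp only [qf, Finset.mul_sum, mul_assoc]

theorem Anis.mul_left {n : ℕ} {d : Fin n → K} (hd : Anis K d) {a : K} (ha : a ≠ 0) :
    Anis K (fun i => a * d i) := fun v hv =>
  hd v ((mul_eq_zero.mp (qf_mul_left a d v ▸ hv)).resolve_left ha)

theorem Isom.symm {n m : ℕ} {d : Fin n → K} {e : Fin m → K} (h : Isom K d e) : Isom K e d := by
  obtain ⟨φ, hφ⟩ := h
  exact ⟨φ.symm, fun v => by rw [← hφ, φ.apply_symm_apply]⟩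

theorem Isom.Dset_eq {n m : ℕ} {d : Fin n → K} {e : Fin m → K} (h : Isom K d e) :
    Dset K d = Dset K e := by
  obtain ⟨φ, hφ⟩ := h
  ext z
  exact ⟨fun ⟨v, hv⟩ => ⟨φ v, (hφ v).trans hv⟩,
    fun ⟨w, hw⟩ => ⟨φ.symm w, by rw [← hφ, φ.apply_symm_apply, hw]⟩⟩

theorem Dset_append_zero {k m : ℕ} (r : Fin m → K) :
    Dset K (Fin.append (fun _ : Fin k => (0 : K)) r) = Dset K r := by
  ext z
  constructor
  · rintro ⟨v, rfl⟩
    exact ⟨fun i => v (Fin.natAdd k i), by simp [qf, Fin.sum_univ_add]⟩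
  · rintro ⟨w, rfl⟩
    exact ⟨Fin.append 0 w, by simp [qf, Fin.sum_univ_add]⟩

theorem IsAnisPart.Dset_eq {n m : ℕ} {r : Fin n → K} {q : Fin m → K} (h : IsAnisPart K r q) :
    Dset K q = Dset K r := by
  obtain ⟨-, k, hk⟩ := h
  rw [hk.Dset_eq, Dset_append_zero]

variable [CharP K 2]

theorem qf_sum_smul {n : ℕ} (d : Fin n → K) {ι : Type*} (s : Finset ι) (c : ι → K)
    (u : ι → Fin n → K) : qf K d (∑ j ∈ s, c j • u j) = ∑ j ∈ s, c j ^ 2 * qf K d (u j) := by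
  simp only [qf, Finset.sum_apply, Pi.smul_apply, smul_eq_mul, CharTwo.sum_sq, Finset.mul_sum]
  rw [Finset.sum_comm]
  exact Finset.sum_congr rfl fun j _ => Finset.sum_congr rfl fun i _ => by ring

theorem mul_mem_Dset {n m : ℕ} {d : Fin n → K} {e : Fin m → K} {a : K}
    (h : ∀ i, a * d i ∈ Dset K e) {z : K} (hz : z ∈ Dset K d) : a * z ∈ Dset K e := by
  choose w hw using h
  obtain ⟨v, rfl⟩ := hz
  refine ⟨∑ i, v i • w i, ?_⟩
  rw [qf_sum_smul, qf_eq_sum_sq_mul, Finset.mul_sum]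
  exact Finset.sum_congr rfl fun i _ => by rw [hw]; ring

theorem isom_qf_basis {n m : ℕ} (τ : Fin m → K) (b : Module.Basis (Fin n) K (Fin m → K)) :
    Isom K (fun i => qf K τ (b i)) τ :=
  ⟨b.equivFun.symm, fun v => by
    rw [b.equivFun_symm_apply, qf_sum_smul, qf_eq_sum_sq_mul (fun i => qf K τ (b i))]⟩

theorem linearIndependent_of_anis {n m : ℕ} {σ : Fin n → K} (hσ : Anis K σ) {τ : Fin m → K}
    {u : Fin n → Fin m → K} (hu : ∀ i, qf K τ (u i) = σ i) : LinearIndependent K u := by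
  rw [Fintype.linearIndependent_iff]
  intro g hg
  have hqf : qf K σ g = qf K τ (∑ i, g i • u i) := by
    simp only [qf_sum_smul, hu, qf_eq_sum_sq_mul σ g]
  have := hσ g (by rw [hqf, hg]; simp [qf])
  exact congrFun this

theorem subform_of_forall_mem_Dset {n m : ℕ} {σ : Fin n → K} {τ : Fin m → K} (hσ : Anis K σ)
    (h : ∀ i, σ i ∈ Dset K τ) : Subform K σ τ := by
  choose u hu using h
  have hli := linearIndependent_of_anis hσ hu
  let b := Module.Basis.sumExtend hli
  have : Finite (Module.Basis.sumExtendIndex hli) :=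
    have := Module.Finite.finite_basis b
    Finite.of_injective _ (Sum.inr_injective (α := Fin n))
  let e := Finite.equivFin (Module.Basis.sumExtendIndex hli)
  have hb : ∀ i, b (Sum.inl i) = u i := fun i => by simp [b, Module.Basis.sumExtend]; rfl
  refine ⟨_, fun l => qf K τ (b (Sum.inr (e.symm l))), Isom.symm ?_⟩
  convert isom_qf_basis τ (b.reindex ((Equiv.sumCongr (Equiv.refl _) e).trans finSumFinEquiv))
    using 1
  funext i
  refine Fin.addCases (fun i => ?_) (fun l => ?_) i <;>
    simp only [Module.Basis.reindex_apply, Equiv.symm_trans_apply, Equiv.sumCongr_symm,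
      finSumFinEquiv_symm_apply_castAdd, finSumFinEquiv_symm_apply_natAdd, Equiv.sumCongr_apply,
      Sum.map_inl, Sum.map_inr, Equiv.refl_symm, Equiv.refl_apply, Fin.append_left,
      Fin.append_right, hb, hu]

theorem simSubform_of_forall_mul_mem_Dset {n n' m₁ m₂ : ℕ} {P : Fin n → K} {Q : Fin n' → K}
    {p₁ : Fin m₁ → K} {qa : Fin m₂ → K} {a : K} (ha : a ≠ 0) (h : ∀ i, a * P i ∈ Dset K Q)
    (hp₁ : IsAnisPart K p₁ P) (hqa : IsAnisPart K qa Q) : SimSubform K p₁ qa :=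
  ⟨a, ha, subform_of_forall_mem_Dset (hp₁.1.mul_left ha) fun i =>
    hqa.Dset_eq ▸ mul_mem_Dset h (hp₁.Dset_eq ▸ mem_Dset p₁ i)⟩

end QuasilinearForms

open MvPolynomial

theorem eq_zero_of_sum_C_mul_sq_eq_zero {F σ : Type} [Field F] [CharP F 2] {m : ℕ}
    {q : Fin m → F} (hq : Anis F q) {f : Fin m → MvPolynomial σ F}
    (h : ∑ j, C (q j) * f j ^ 2 = 0) : f = 0 := by
  funext j
  ext μ
  have hμ := congrArg (coeff (2 • μ)) h
  simp only [coeff_sum, coeff_C_mul, coeff_pow_expChar_smul, coeff_zero] at hμ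
  exact congrFun (hq (fun j => coeff μ (f j)) hμ) j

theorem eq_zero_of_qf_aeval_eq_zero {F K : Type} [Field F] [Field K] [Algebra F K] [CharP F 2]
    {m n : ℕ} {q : Fin m → F} (hq : Anis F q) {y : Fin n → K}
    (hy : Function.Injective (aeval y : MvPolynomial (Fin n) F →ₐ[F] K))
    {R : Fin m → MvPolynomial (Fin n) F} (h : qf K (bc F K q) (fun j => aeval y (R j)) = 0) :
    R = 0 :=
  eq_zero_of_sum_C_mul_sq_eq_zero hq (hy (by simpa [qf, bc] using h))

section GenericPoint

variable {F K : Type} [Field F] [Field K] [Algebra F K] {n : ℕ}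

theorem aeval_chartD {S : Type} [CommRing S] [Algebra F S] (p : Fin (n + 2) → F)
    (y : Fin (n + 1) → S) :
    aeval y (chartD F p) =
      ∑ i, algebraMap F S (p i.castSucc) * y i ^ 2 + algebraMap F S (p (Fin.last (n + 1))) := by
  simp [chartD]

theorem two_le_degreeOf_chartD {p : Fin (n + 2) → F} (hp0 : p 0 ≠ 0) :
    2 ≤ degreeOf 0 (chartD F p) := by
  have hcoeff : coeff (Finsupp.single 0 2) (chartD F p) = p 0 := by
    have h0 : (0 : Fin (n + 1) →₀ ℕ) ≠ Finsupp.single 0 2 :=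
      (Finsupp.single_ne_zero.mpr two_ne_zero).symm
    simp [chartD, coeff_sum, coeff_C_mul, coeff_X_pow, coeff_C, h0,
      Finsupp.single_left_inj two_ne_zero]
  simpa using le_degreeOf_of_mem_support (0 : Fin (n + 1))
    (mem_support_iff.mpr (hcoeff ▸ hp0 : coeff (Finsupp.single 0 2) (chartD F p) ≠ 0))

theorem injective_aeval_succ {p : Fin (n + 2) → F} (hp0 : p 0 ≠ 0) {x : Fin (n + 1) → K}
    (hker : RingHom.ker (aeval x : MvPolynomial (Fin (n + 1)) F →ₐ[F] K) =
      Ideal.span {chartD F p}) :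
    Function.Injective (aeval (fun i : Fin n => x i.succ) : MvPolynomial (Fin n) F →ₐ[F] K) := by
  classical
  rw [injective_iff_map_eq_zero]
  intro h hh
  have hmem : rename Fin.succ h ∈ RingHom.ker (aeval x) := by
    rw [RingHom.mem_ker, aeval_rename]; exact hh
  obtain ⟨g, hg⟩ := Ideal.mem_span_singleton.mp (hker ▸ hmem)
  by_contra h0
  have hg0 : g ≠ 0 := by
    rintro rfl
    exact h0 (rename_injective _ (Fin.succ_injective _) (by simpa using hg))
  have hchart := two_le_degreeOf_chartD hp0 (F := F)
  have hdeg : degreeOf 0 (rename Fin.succ h) = 0 := by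
    by_contra hne
    rw [← Ne, ← mem_vars_iff_degreeOf_ne_zero] at hne
    obtain ⟨j, -, hj⟩ := Finset.mem_image.mp (vars_rename _ _ hne)
    exact Fin.succ_ne_zero j hj
  have hchart0 : chartD F p ≠ 0 :=
    ne_zero_of_degreeOf_ne_zero (by omega : degreeOf 0 (chartD F p) ≠ 0)
  rw [hg, degreeOf_mul_eq hchart0 hg0] at hdeg
  omega

theorem algebraMap_last_eq_qf [CharP K 2] {p : Fin (n + 2) → F} {x : Fin (n + 1) → K}
    (hx : aeval x (chartD F p) = 0) :
    algebraMap F K (p (Fin.last (n + 1))) = qf K (fun i => algebraMap F K (p i.castSucc)) x :=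
  (CharTwo.add_eq_zero.mp ((aeval_chartD p x).symm.trans hx)).symm

theorem exists_aeval_succ_eq_sq [CharP K 2] {p : Fin (n + 2) → F} (hp0 : p 0 ≠ 0)
    {x : Fin (n + 1) → K} (hx : aeval x (chartD F p) = 0) :
    ∃ T : MvPolynomial (Fin n) F, aeval (fun i : Fin n => x i.succ) T = x 0 ^ 2 := by
  refine ⟨C (p 0)⁻¹ * (∑ i : Fin n, C (p i.succ.castSucc) * X i ^ 2 + C (p (Fin.last (n + 1)))),
    ?_⟩
  have hlast := algebraMap_last_eq_qf hx
  rw [qf, Fin.sum_univ_succ] at hlast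
  simp only [map_mul, map_add, map_sum, map_pow, aeval_C, aeval_X]
  rw [hlast, Fin.castSucc_zero, add_left_comm, CharTwo.add_self_eq_zero, add_zero, map_inv₀,
    inv_mul_cancel_left₀ ((map_ne_zero _).mpr hp0)]

theorem exists_aeval_eq_add_mul {x : Fin (n + 1) → K}
    (hθ : ∃ T : MvPolynomial (Fin n) F, aeval (fun i : Fin n => x i.succ) T = x 0 ^ 2)
    (P : MvPolynomial (Fin (n + 1)) F) :
    ∃ R S : MvPolynomial (Fin n) F, aeval x P =
      aeval (fun i : Fin n => x i.succ) R + aeval (fun i : Fin n => x i.succ) S * x 0 := by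
  obtain ⟨T, hT⟩ := hθ
  induction P using MvPolynomial.induction_on with
  | C a => exact ⟨C a, 0, by simp⟩
  | add P Q hP hQ =>
    obtain ⟨R₁, S₁, h₁⟩ := hP
    obtain ⟨R₂, S₂, h₂⟩ := hQ
    exact ⟨R₁ + R₂, S₁ + S₂, by simp only [map_add, h₁, h₂]; ring⟩
  | mul_X P i hP =>
    obtain ⟨R, S, h⟩ := hP
    induction i using Fin.cases with
    | zero => exact ⟨S * T, R, by simp only [map_mul, aeval_X, h, hT]; ring⟩
    | succ j => exact ⟨R * X j, S * X j, by simp only [map_mul, aeval_X, h]; ring⟩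

noncomputable def axisLine {N : ℕ} (x : Fin N → K) (i : Fin N) : Fin N → Polynomial K :=
  fun k => Polynomial.C (x k) + (Pi.single i Polynomial.X : Fin N → Polynomial K) k

theorem coeff_zero_aeval_axisLine {N : ℕ} (x : Fin N → K) (i : Fin N)
    (P : MvPolynomial (Fin N) F) : (aeval (axisLine x i) P).coeff 0 = aeval x P := by
  rw [Polynomial.coeff_zero_eq_eval_zero, ← Polynomial.coe_aeval_eq_eval,
    ← AlgHom.restrictScalars_apply F, comp_aeval_apply]
  congr 2
  funext k
  by_cases hk : k = i <;> simp [axisLine, hk]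

theorem aeval_axisLine_chartD [CharP K 2] (p : Fin (n + 2) → F) (x : Fin (n + 1) → K)
    (i : Fin (n + 1)) :
    aeval (axisLine x i) (chartD F p) = Polynomial.C (aeval x (chartD F p)) +
      Polynomial.C (algebraMap F K (p i.castSucc)) * Polynomial.X ^ 2 := by
  simp only [aeval_chartD, axisLine, CharTwo.add_sq, mul_add, Finset.sum_add_distrib]
  simp [Pi.single_apply, Polynomial.C_mul, Polynomial.C_pow, Polynomial.algebraMap_apply]
  ring

theorem coeff_one_aeval_axisLine_zero (x : Fin (n + 1) → K) (R S : MvPolynomial (Fin n) F) :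
    (aeval (axisLine x 0) (rename Fin.succ R + rename Fin.succ S * X 0)).coeff 1 =
      aeval (fun i : Fin n => x i.succ) S := by
  have hsucc : ∀ P : MvPolynomial (Fin n) F,
      aeval (axisLine x 0) (rename Fin.succ P) =
        Polynomial.C (aeval (fun i : Fin n => x i.succ) P) := by
    intro P
    rw [aeval_rename, ← Polynomial.CAlgHom_apply (R := F), comp_aeval_apply]
    congr 2
    funext k
    simp [axisLine, Fin.succ_ne_zero]
  rw [map_add, map_mul, hsucc, hsucc, aeval_X]
  simp only [axisLine, Pi.single_eq_same, Polynomial.coeff_add, Polynomial.coeff_C_mul,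
    Polynomial.coeff_C, Polynomial.coeff_X_one]
  simp

theorem algebraMap_mul_aeval_eq_qf [CharP K 2] {p : Fin (n + 2) → F} {x : Fin (n + 1) → K}
    (hx : aeval x (chartD F p) = 0) {m : ℕ} (q : Fin m → F)
    (A : Fin m → MvPolynomial (Fin (n + 1)) F) (G : MvPolynomial (Fin (n + 1)) F)
    (hG : ∑ j, C (q j) * A j ^ 2 = chartD F p * G) (i : Fin (n + 1)) :
    algebraMap F K (p i.castSucc) * aeval x G =
      qf K (bc F K q) (fun j => (aeval (axisLine x i) (A j)).coeff 1) := by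
  have h2 := congrArg (fun P => (aeval (axisLine x i) P).coeff 2) hG
  simp only [map_sum, map_mul, map_pow, aeval_C, aeval_axisLine_chartD, hx, map_zero,
    zero_add, Polynomial.finsetSum_coeff, Polynomial.algebraMap_apply, Polynomial.coeff_C_mul] at h2
  have hsq (f : Polynomial K) : (f ^ 2).coeff 2 = f.coeff 1 ^ 2 :=
    Polynomial.coeff_pow_expChar_mul 2 f 1
  rw [mul_assoc, Polynomial.coeff_C_mul, Polynomial.coeff_X_pow_mul', if_pos le_rfl,
    Nat.sub_self, coeff_zero_aeval_axisLine] at h2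
  simp only [hsq] at h2
  exact h2.symm

theorem exists_mul_mem_Dset [CharP F 2] [CharP K 2] {p : Fin (n + 2) → F} (hp0 : p 0 ≠ 0)
    {m : ℕ} {q : Fin m → F} (hq : Anis F q) (hK : IsFunFld F p K) (hiso : ¬ Anis K (bc F K q)) :
    ∃ a : K, a ≠ 0 ∧ ∀ i, a * bc F K p i ∈ Dset K (bc F K q) := by
  obtain ⟨x, hker, hfrac⟩ := hK
  set x' : Fin n → K := fun i => x i.succ
  have hx : aeval x (chartD F p) = 0 :=
    RingHom.mem_ker.mp (hker ▸ Ideal.mem_span_singleton_self _)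
  have hinj := injective_aeval_succ hp0 hker
  obtain ⟨v, hv, hv0⟩ : ∃ v, qf K (bc F K q) v = 0 ∧ v ≠ 0 := by simpa [Anis] using hiso
  obtain ⟨B, A, hB, hA⟩ := exists_common_denominator (aeval x) hfrac v
  choose R S hRS using fun j => exists_aeval_eq_add_mul (exists_aeval_succ_eq_sq hp0 hx) (A j)
  set w : Fin m → K := fun j => aeval x' (R j) + aeval x' (S j) * x 0
  have hw : w = aeval x B • v := by
    funext j
    rw [Pi.smul_apply, smul_eq_mul, mul_comm, hA, hRS]
  have hw0 : w ≠ 0 := by rw [hw]; exact smul_ne_zero hB hv0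
  have hqw : qf K (bc F K q) w = 0 := by rw [hw, qf_smul, hv, mul_zero]
  set A' : Fin m → MvPolynomial (Fin (n + 1)) F :=
    fun j => rename Fin.succ (R j) + rename Fin.succ (S j) * X 0
  have hA' : ∀ j, aeval x (A' j) = w j := fun j => by
    simp only [A', w, map_add, map_mul, aeval_rename, aeval_X]
    rfl
  obtain ⟨G, hG⟩ : chartD F p ∣ ∑ j, C (q j) * A' j ^ 2 := by
    refine Ideal.mem_span_singleton.mp (hker ▸ RingHom.mem_ker.mpr ?_)
    simp only [map_sum, map_mul, map_pow, aeval_C, hA']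
    exact hqw
  have hval := algebraMap_mul_aeval_eq_qf hx q A' G hG
  have hG0 : aeval x G ≠ 0 := by
    intro h0
    have hS : S = 0 := eq_zero_of_qf_aeval_eq_zero hq hinj (by
      simpa only [A', coeff_one_aeval_axisLine_zero, h0, mul_zero] using (hval 0).symm)
    have hR : R = 0 := eq_zero_of_qf_aeval_eq_zero hq hinj (by simpa [w, hS] using hqw)
    exact hw0 (funext fun j => by simp [w, hR, hS])
  refine ⟨aeval x G, hG0, Fin.lastCases ?_ fun i => ⟨_, by rw [mul_comm]; exact (hval i).symm⟩⟩
  rw [bc, algebraMap_last_eq_qf hx]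
  exact mul_mem_Dset (fun i => ⟨_, by rw [mul_comm]; exact (hval i).symm⟩) ⟨x, rfl⟩

end GenericPoint

end QLin

open QLin in
/-- Let `p` and `q` be anisotropic quasilinear quadratic forms of
dimension `≥ 2` over a field `F` of characteristic `2`. If `q_{F(p)}` is isotropic, then
`p₁ = (p_{F(p)})_an` is similar to a subform of `(q_{F(p)})_an`. -/
theorem statement11 (F : Type) [Field F] (h2 : (2 : F) = 0) {np nq : ℕ}
    (p : Fin (np + 2) → F) (q : Fin (nq + 2) → F) (hp : Anis F p) (hq : Anis F q)
    (K : Type) [Field K] [Algebra F K] (hK : IsFunFld F p K)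
    (hiso : ¬ Anis K (bc F K q)) :
    ∀ (m₁ : ℕ) (p₁ : Fin m₁ → K), IsAnisPart K p₁ (bc F K p) →
    ∀ (m₂ : ℕ) (qa : Fin m₂ → K), IsAnisPart K qa (bc F K q) →
      SimSubform K p₁ qa := by
  intro m₁ p₁ hp₁ m₂ qa hqa
  have : CharP F 2 := CharTwo.of_one_ne_zero_of_two_eq_zero one_ne_zero h2
  have : CharP K 2 := (Algebra.charP_iff F K 2).mp this
  obtain ⟨a, ha, hD⟩ := exists_mul_mem_Dset (hp.coeff_ne_zero 0) hq hK hiso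
  exact simSubform_of_forall_mul_mem_Dset ha hD hp₁ hqa
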